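/- Let N, M be positive integers (number of time slots per circular sweep and number of sweeps). Suppose the net power deficit is constant during each sweep, i.e. there is F : {1,…,M} → ℝ with F(m) > 0 for all m, such that the battery energy E : {1,…,NM} → ℝ satisfies E(1) = E_Ini > 0, E(NM) > 0, and F(⌈n/N⌉) ≤ (E(n−1) − E(n))/(Δ·η_a) for every n with 2 ≤ n ≤ NM, where Δ > 0 and η_a > 0. Then (N − 1)·Σ_{m=1}^{M} F(m) < E_Ini/(Δ·η_a); in particular N < E_Ini/(Δ·η_a·Σ_{m=1}^{M} F(m)) + 1, so the sweep count N is subject to a finite upper bound. -/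
import Mathlib

private lemma ceilDiv_eq_of_bounds {N n m : ℕ} (hN : 0 < N)
    (h1 : N * m < n) (h2 : n ≤ N * (m + 1)) : n ⌈/⌉ N = m + 1 := by
  have hle : n ⌈/⌉ N ≤ m + 1 := (ceilDiv_le_iff_le_mul hN).2 h2
  have hgt : ¬ n ⌈/⌉ N ≤ m := fun h => absurd ((ceilDiv_le_iff_le_mul hN).1 h) (not_le.2 h1)
  omega

private lemma sweep_sum (F : ℕ → ℝ) (N : ℕ) (hN : 0 < N) :
    ∀ M : ℕ, ∑ n ∈ Finset.Icc 1 (N * M), F (n ⌈/⌉ N)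
      = (N : ℝ) * ∑ m ∈ Finset.Icc 1 M, F m := by
  intro M
  induction M with
  | zero => simp
  | succ M ih =>
    have hsub : Finset.Icc 1 (N * M) ⊆ Finset.Icc 1 (N * (M + 1)) := by
      apply Finset.Icc_subset_Icc_right; nlinarith
    have hsplit : Finset.Icc 1 (N * (M + 1)) \ Finset.Icc 1 (N * M)
        = Finset.Ioc (N * M) (N * (M + 1)) := by
      ext x
      simp only [Finset.mem_sdiff, Finset.mem_Icc, Finset.mem_Ioc]
      omega
    rw [← Finset.sum_sdiff hsub, hsplit]
    have hconst : ∑ n ∈ Finset.Ioc (N * M) (N * (M + 1)), F (n ⌈/⌉ N)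
        = (N : ℝ) * F (M + 1) := by
      rw [Finset.sum_congr rfl (fun n hn => by
        rw [ceilDiv_eq_of_bounds hN (Finset.mem_Ioc.1 hn).1 (Finset.mem_Ioc.1 hn).2])]
      rw [Finset.sum_const, Nat.card_Ioc]
      have : N * (M + 1) - N * M = N := by ring_nf; omega
      rw [this, nsmul_eq_mul]
    rw [hconst, ih, Finset.sum_Icc_succ_top (by omega : 1 ≤ M + 1)]
    ring

private lemma telescope (E : ℕ → ℝ) :
    ∀ K : ℕ, 1 ≤ K → ∑ n ∈ Finset.Icc 2 K, (E (n - 1) - E n) = E 1 - E K := by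
  intro K
  induction K with
  | zero => omega
  | succ K ih =>
    intro _
    rcases Nat.lt_or_ge K 1 with h | h
    · interval_cases K
      · simp
    · rw [Finset.sum_Icc_succ_top (by omega : 2 ≤ K + 1), ih h]
      simp

/-- Proposition 1 (upper bound on the sweep count `N`).
A mission of `M` circular sweeps is discretized into `N*M` time slots of duration `Δ`;
slot `n` belongs to sweep `⌈n/N⌉` (natural-number ceiling division).  `F m > 0` is the
constant net power deficit (propulsion minus harvested power) during sweep `m`.  The
battery energy `E` starts at `E_Ini > 0`, stays positive at the final slot, and
satisfies the per-slot energy decrease `F ⌈n/N⌉ ≤ (E (n-1) - E n)/(Δ·η_a)`.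
Then `(N-1)·Σ_{m=1}^M F m < E_Ini/(Δ·η_a)`, hence
`N < E_Ini/(Δ·η_a·Σ_{m=1}^M F m) + 1`. -/
theorem sweep_count_upper_bound
    (N M : ℕ) (hN : 0 < N) (hM : 0 < M)
    (F : ℕ → ℝ) (hF : ∀ m, 1 ≤ m → m ≤ M → 0 < F m)
    (E : ℕ → ℝ) (E_Ini Δ η_a : ℝ)
    (hEIni : 0 < E_Ini) (hE1 : E 1 = E_Ini) (hEend : 0 < E (N * M))
    (hΔ : 0 < Δ) (hη : 0 < η_a)
    (hdec : ∀ n, 2 ≤ n → n ≤ N * M →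
      F (n ⌈/⌉ N) ≤ (E (n - 1) - E n) / (Δ * η_a)) :
    ((N : ℝ) - 1) * (∑ m ∈ Finset.Icc 1 M, F m) < E_Ini / (Δ * η_a) ∧
    (N : ℝ) < E_Ini / (Δ * η_a * ∑ m ∈ Finset.Icc 1 M, F m) + 1 := by
  have hΔη : 0 < Δ * η_a := mul_pos hΔ hη
  have hNM : 1 ≤ N * M := Nat.one_le_iff_ne_zero.2 (by positivity)
  -- sum of the decrements
  have hsum : ∑ n ∈ Finset.Icc 2 (N * M), F (n ⌈/⌉ N)
      ≤ (E 1 - E (N * M)) / (Δ * η_a) := by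
    calc ∑ n ∈ Finset.Icc 2 (N * M), F (n ⌈/⌉ N)
        ≤ ∑ n ∈ Finset.Icc 2 (N * M), (E (n - 1) - E n) / (Δ * η_a) :=
          Finset.sum_le_sum fun n hn =>
            hdec n (Finset.mem_Icc.1 hn).1 (Finset.mem_Icc.1 hn).2
      _ = (∑ n ∈ Finset.Icc 2 (N * M), (E (n - 1) - E n)) / (Δ * η_a) := by
          rw [Finset.sum_div]
      _ = (E 1 - E (N * M)) / (Δ * η_a) := by rw [telescope E (N * M) hNM]
  -- relate the slot sum to the sweep sum
  have hone : (1 : ℕ) ⌈/⌉ N = 1 := by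
    have := ceilDiv_eq_of_bounds (n := 1) (m := 0) hN (by omega) (by omega)
    simpa using this
  have hsplit1 : ∑ n ∈ Finset.Icc 1 (N * M), F (n ⌈/⌉ N)
      = F 1 + ∑ n ∈ Finset.Icc 2 (N * M), F (n ⌈/⌉ N) := by
    have : Finset.Icc 1 (N * M) = insert 1 (Finset.Icc 2 (N * M)) := by
      ext x; simp only [Finset.mem_Icc, Finset.mem_insert]; omega
    rw [this, Finset.sum_insert (by simp), hone]
  have hFsum : ∑ n ∈ Finset.Icc 2 (N * M), F (n ⌈/⌉ N)
      = (N : ℝ) * (∑ m ∈ Finset.Icc 1 M, F m) - F 1 := by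
    have := sweep_sum F N hN M
    rw [hsplit1] at this; linarith
  set S := ∑ m ∈ Finset.Icc 1 M, F m with hS
  have hF1 : 0 < F 1 := hF 1 le_rfl hM
  have hF1S : F 1 ≤ S := by
    have : F 1 = ∑ m ∈ {1}, F m := by simp
    rw [this, hS]
    apply Finset.sum_le_sum_of_subset_of_nonneg
    · simp only [Finset.singleton_subset_iff, Finset.mem_Icc]; omega
    · intro m hm _
      exact (hF m (Finset.mem_Icc.1 hm).1 (Finset.mem_Icc.1 hm).2).le
  have hSpos : 0 < S := lt_of_lt_of_le hF1 hF1S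
  have hmain : ((N : ℝ) - 1) * S < E_Ini / (Δ * η_a) := by
    have h1 : ((N : ℝ) - 1) * S ≤ (N : ℝ) * S - F 1 := by nlinarith
    have h2 : (N : ℝ) * S - F 1 ≤ (E 1 - E (N * M)) / (Δ * η_a) := by
      rw [← hFsum]; exact hsum
    have h3 : (E 1 - E (N * M)) / (Δ * η_a) < E_Ini / (Δ * η_a) := by
      have hlt : E 1 - E (N * M) < E_Ini := by rw [hE1]; linarith
      exact (div_lt_div_iff_of_pos_right hΔη).2 hlt
    linarith
  refine ⟨hmain, ?_⟩
  have : (N : ℝ) - 1 < E_Ini / (Δ * η_a) / S := by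
    rw [lt_div_iff₀ hSpos]; exact hmain
  have heq : E_Ini / (Δ * η_a) / S = E_Ini / (Δ * η_a * S) := by
    rw [div_div]
  linarith [this, heq ▸ this]
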